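/- arXiv:1509.00622 — 3 statements merged into one kernel-verified Lean document; each statement's English description precedes it below -/
import Mathlib

section
/- Let w_1, w_2 be binary words of length at most n and let 1 ≤ k ≤ n. If w_1 and w_2 are not k-binomial equivalent, then the difference polynomial Q_{w_1,w_2} = Q_{k,w_1} − Q_{k,w_2} ∈ ℤ[x] is nonzero and all its coefficients have absolute value at most n^k. -/
open Polynomial

/-- `binom u v` is the number of occurrences of `v` as a scattered factor of `u`. -/
def binom {α : Type*} [DecidableEq α] : List α → List α → ℕ
  | _, [] => 1
  | [], _ :: _ => 0
  | a :: u, b :: v => (if a = b then binom u v else 0) + binom u (b :: v)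

/-- `k`-binomial equivalence. -/
def kBinomEquiv {α : Type*} [DecidableEq α] (k : ℕ) (w₁ w₂ : List α) : Prop :=
  ∀ x : List α, x ≠ [] → x.length ≤ k → binom w₁ x = binom w₂ x

/-- `binVal v` is the number whose binary representation (with possible leading
zeros) is the binary word `v`. -/
def binVal (v : List Bool) : ℕ :=
  v.foldl (fun acc b => 2 * acc + (if b then 1 else 0)) 0

/-- The polynomial `Q_{k,w}(x) = Σ_{1 ≤ |v| ≤ k} binom(w,v) · x^{bin(1v)}`. -/
noncomputable def Qpoly (k : ℕ) (w : List Bool) : Polynomial ℤ :=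
  ∑ t ∈ Finset.Icc 1 k, ∑ f : Fin t → Bool,
    Polynomial.C (binom w (List.ofFn f) : ℤ) * Polynomial.X ^ binVal (true :: List.ofFn f)

lemma foldl_binVal (v : List Bool) (a : ℕ) :
    v.foldl (fun acc b => 2 * acc + (if b then 1 else 0)) a
      = a * 2 ^ v.length + binVal v := by
  induction v generalizing a with
  | nil => simp [binVal]
  | cons b v ih =>
    show List.foldl _ (2 * a + _) v = _
    rw [ih]
    have : binVal (b :: v) = (2 * 0 + if b then 1 else 0) * 2 ^ v.length + binVal v := by
      show List.foldl _ _ v = _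
      rw [ih]
    simp only [List.length_cons]
    rw [show binVal (b :: v) = _ from this]
    ring

lemma binVal_cons (b : Bool) (v : List Bool) :
    binVal (b :: v) = (if b then 1 else 0) * 2 ^ v.length + binVal v := by
  have := foldl_binVal v (2 * 0 + if b then 1 else 0)
  simpa [binVal] using this

lemma binVal_lt (v : List Bool) : binVal v < 2 ^ v.length := by
  induction v with
  | nil => simp [binVal]
  | cons b v ih =>
    rw [binVal_cons]
    have : (if b then 1 else 0 : ℕ) ≤ 1 := by split <;> simp
    simp only [List.length_cons, pow_succ]
    nlinarith [Nat.one_le_two_pow (n := v.length)]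

lemma binVal_inj_of_len {v₁ v₂ : List Bool} (hl : v₁.length = v₂.length)
    (h : binVal v₁ = binVal v₂) : v₁ = v₂ := by
  induction v₁ generalizing v₂ with
  | nil => cases v₂ with
    | nil => rfl
    | cons b v => simp at hl
  | cons b₁ t₁ ih =>
    cases v₂ with
    | nil => simp at hl
    | cons b₂ t₂ =>
      simp only [List.length_cons, Nat.add_right_cancel_iff] at hl
      rw [binVal_cons, binVal_cons, hl] at h
      have h₁ := binVal_lt t₁
      have h₂ := binVal_lt t₂
      rw [hl] at h₁
      have hb : b₁ = b₂ := by
        cases b₁ <;> cases b₂ <;> simp_all <;> omega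
      subst hb
      have : binVal t₁ = binVal t₂ := by omega
      rw [ih hl this]

lemma binVal_true_inj {v₁ v₂ : List Bool} 
    (h : binVal (true :: v₁) = binVal (true :: v₂)) : v₁ = v₂ := by
  have hl : v₁.length = v₂.length := by
    by_contra hne
    rw [binVal_cons, binVal_cons] at h
    have h₁ := binVal_lt v₁
    have h₂ := binVal_lt v₂
    rcases Nat.lt_or_ge v₁.length v₂.length with hlt | hge
    · have : (2:ℕ) ^ (v₁.length + 1) ≤ 2 ^ v₂.length := Nat.pow_le_pow_right (by norm_num) hlt
      simp only [if_pos] at h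
      rw [pow_succ] at this
      omega
    · have hlt : v₂.length < v₁.length := by omega
      have : (2:ℕ) ^ (v₂.length + 1) ≤ 2 ^ v₁.length := Nat.pow_le_pow_right (by norm_num) hlt
      simp only [if_pos] at h
      rw [pow_succ] at this
      omega
  apply binVal_inj_of_len hl
  rw [binVal_cons, binVal_cons, hl] at h
  omega

lemma binom_le_choose {α : Type*} [DecidableEq α] (u v : List α) :
    binom u v ≤ u.length.choose v.length := by
  induction u generalizing v with
  | nil => cases v with
    | nil => simp [binom]
    | cons b v => simp [binom]
  | cons a u ih =>
    cases v with
    | nil => simp [binom]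
    | cons b v =>
      show (if a = b then binom u v else 0) + binom u (b :: v) ≤ _
      have h1 : (if a = b then binom u v else 0) ≤ u.length.choose v.length := by
        split
        · exact ih v
        · exact Nat.zero_le _
      have h2 := ih (b :: v)
      simp only [List.length_cons] at h2
      simp only [List.length_cons, Nat.choose_succ_succ, Nat.succ_eq_add_one]
      omega

theorem Qpoly_diff_ne_zero_and_coeff_bound (n k : ℕ) (hk₁ : 1 ≤ k) (hkn : k ≤ n)
    (w₁ w₂ : List Bool) (h₁ : w₁.length ≤ n) (h₂ : w₂.length ≤ n)
    (hne : ¬ kBinomEquiv k w₁ w₂) :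
    Qpoly k w₁ - Qpoly k w₂ ≠ 0 ∧
      ∀ i : ℕ, |(Qpoly k w₁ - Qpoly k w₂).coeff i| ≤ (n : ℤ) ^ k := by
  classical
  set S : Finset ((t : ℕ) × (Fin t → Bool)) :=
    (Finset.Icc 1 k).sigma (fun t => (Finset.univ : Finset (Fin t → Bool))) with hS
  set e : ((t : ℕ) × (Fin t → Bool)) → ℕ := fun p => binVal (true :: List.ofFn p.2) with he
  -- coefficient formula
  have hcoeff : ∀ (w : List Bool) (i : ℕ), (Qpoly k w).coeff i
      = ∑ p ∈ S, if e p = i then (binom w (List.ofFn p.2) : ℤ) else 0 := by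
    intro w i
    rw [hS, Finset.sum_sigma, Qpoly, Polynomial.finset_sum_coeff]
    refine Finset.sum_congr rfl fun t _ => ?_
    rw [Polynomial.finset_sum_coeff]
    refine Finset.sum_congr rfl fun f _ => ?_
    rw [Polynomial.coeff_C_mul, Polynomial.coeff_X_pow]
    dsimp only [he]
    rw [mul_ite, mul_one, mul_zero]
    by_cases h : binVal (true :: List.ofFn f) = i
    · rw [if_pos h.symm, if_pos h]
    · rw [if_neg (fun hh => h hh.symm), if_neg h]
  -- injectivity of exponents
  have hinj : ∀ p ∈ S, ∀ q ∈ S, e p = e q → p = q := by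
    intro p _ q _ h
    have hofn : List.ofFn p.2 = List.ofFn q.2 := binVal_true_inj h
    have hlen : p.1 = q.1 := by
      have := congrArg List.length hofn
      simpa using this
    obtain ⟨t, f⟩ := p
    obtain ⟨t', g⟩ := q
    dsimp at hlen
    subst hlen
    have : f = g := List.ofFn_injective hofn
    rw [this]
  -- difference coefficients
  have hdiff : ∀ i : ℕ, (Qpoly k w₁ - Qpoly k w₂).coeff i
      = ∑ p ∈ S, if e p = i then ((binom w₁ (List.ofFn p.2) : ℤ) - binom w₂ (List.ofFn p.2)) else 0 := by
    intro i
    rw [Polynomial.coeff_sub, hcoeff w₁ i, hcoeff w₂ i, ← Finset.sum_sub_distrib]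
    refine Finset.sum_congr rfl fun p _ => ?_
    split <;> simp
  -- term bound
  have hbound : ∀ p ∈ S, |(binom w₁ (List.ofFn p.2) : ℤ) - binom w₂ (List.ofFn p.2)| ≤ (n : ℤ) ^ k := by
    intro p hp
    obtain ⟨t, f⟩ := p
    dsimp only
    have ht : t ∈ Finset.Icc 1 k := by
      simpa [hS, Finset.mem_sigma] using hp
    rw [Finset.mem_Icc] at ht
    have hlen : (List.ofFn f).length = t := by simp
    have key : ∀ w : List Bool, w.length ≤ n → binom w (List.ofFn f) ≤ n ^ k := by
      intro w hw
      calc binom w (List.ofFn f) ≤ w.length.choose (List.ofFn f).length := binom_le_choose _ _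
        _ ≤ n.choose t := by rw [hlen]; exact Nat.choose_le_choose t hw
        _ ≤ n ^ t := Nat.choose_le_pow n t
        _ ≤ n ^ k := Nat.pow_le_pow_right (le_trans hk₁ hkn) ht.2
    have k₁ := key w₁ h₁
    have k₂ := key w₂ h₂
    have hcast : (n : ℤ) ^ k = ((n ^ k : ℕ) : ℤ) := by push_cast; ring
    rw [hcast, abs_le]
    omega
  constructor
  · -- nonzero
    rw [kBinomEquiv] at hne
    push_neg at hne
    obtain ⟨x, hxne, hxlen, hxd⟩ := hne
    set p₀ : (t : ℕ) × (Fin t → Bool) := ⟨x.length, x.get⟩ with hp₀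
    have hofn : List.ofFn p₀.2 = x := List.ofFn_get x
    have hmem : p₀ ∈ S := by
      simp only [hS, Finset.mem_sigma, Finset.mem_univ, and_true]
      rw [Finset.mem_Icc]
      exact ⟨List.length_pos_iff.mpr hxne, hxlen⟩
    intro h0
    have := hdiff (e p₀)
    rw [h0, Polynomial.coeff_zero] at this
    rw [Finset.sum_eq_single_of_mem p₀ hmem (fun q hq hqne => by
      rw [if_neg]
      intro hEq
      exact hqne (hinj q hq p₀ hmem hEq)), if_pos rfl, hofn] at this
    have : (binom w₁ x : ℤ) = (binom w₂ x : ℤ) := by omega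
    exact hxd (by exact_mod_cast this)
  · -- bound
    intro i
    rw [hdiff i]
    calc |∑ p ∈ S, if e p = i then ((binom w₁ (List.ofFn p.2) : ℤ) - binom w₂ (List.ofFn p.2)) else 0|
        ≤ ∑ p ∈ S, |if e p = i then ((binom w₁ (List.ofFn p.2) : ℤ) - binom w₂ (List.ofFn p.2)) else 0| :=
          Finset.abs_sum_le_sum_abs _ _
      _ = ∑ p ∈ S, if e p = i then |(binom w₁ (List.ofFn p.2) : ℤ) - binom w₂ (List.ofFn p.2)| else 0 := by
          refine Finset.sum_congr rfl fun p _ => ?_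
          split <;> simp
      _ = ∑ p ∈ S.filter (fun p => e p = i), |(binom w₁ (List.ofFn p.2) : ℤ) - binom w₂ (List.ofFn p.2)| := by
          rw [Finset.sum_filter]
      _ ≤ (S.filter (fun p => e p = i)).card • (n : ℤ) ^ k := by
          refine Finset.sum_le_card_nsmul _ _ _ fun p hp => ?_
          exact hbound p (Finset.mem_filter.mp hp).1
      _ ≤ (n : ℤ) ^ k := by
          have hcard : (S.filter (fun p => e p = i)).card ≤ 1 := by
            rw [Finset.card_le_one]
            intro a ha b hb
            rw [Finset.mem_filter] at ha hb
            exact hinj a ha.1 b hb.1 (ha.2.trans hb.2.symm)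
          have hpos : (0 : ℤ) ≤ (n : ℤ) ^ k := by positivity
          calc (S.filter (fun p => e p = i)).card • (n : ℤ) ^ k
              ≤ 1 • (n : ℤ) ^ k := nsmul_le_nsmul_left hpos hcard
            _ = (n : ℤ) ^ k := one_smul _ _
end

section
/- For the automaton A_w of a word w of length n and any word x with 1 ≤ |x| ≤ k, the number of distinct accepting paths of A_w labelled by x equals binom(w, x), the number of occurrences of x as a scattered factor of w. -/
/-- A "good" (non-sink) transition of the automaton `A_w` (with parameter `k`):
from state `(i, j)` on letter `a` one may go to any `(ℓ, j+1)` with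
`i < ℓ ≤ |w|`, `j + 1 ≤ k` and `w[ℓ] = a` (states use 1-based positions). -/
def goodTrans {α : Type*} (w : List α) (k : ℕ) (p : ℕ × ℕ) (a : α) (q : ℕ × ℕ) : Prop :=
  p.1 < q.1 ∧ q.1 ≤ w.length ∧ q.2 = p.2 + 1 ∧ q.2 ≤ k ∧ w[q.1 - 1]? = some a

/-- The full nondeterministic transition relation of `A_w`: either a good
transition, or (when no good transition exists) a transition to the
non-accepting sink state `(|w| + 1, k + 1)`. -/
def delta {α : Type*} (w : List α) (k : ℕ) (p : ℕ × ℕ) (a : α) (q : ℕ × ℕ) : Prop :=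
  goodTrans w k p a q ∨ ((¬ ∃ r, goodTrans w k p a r) ∧ q = (w.length + 1, k + 1))

/-- `runFrom w k p x q`: reading the word `x` from state `p`, the automaton `A_w`
can reach state `q`. -/
def runFrom {α : Type*} (w : List α) (k : ℕ) : ℕ × ℕ → List α → ℕ × ℕ → Prop
  | p, [], q => q = p
  | p, a :: x, q => ∃ r, delta w k p a r ∧ runFrom w k r x q

/-- `A_w` accepts `x`: starting from the initial state `(0,0)` and reading `x`, the
automaton can reach an accepting state `(i, j)` with `1 ≤ j ≤ k` and `j ≤ i`. -/
def accepts {α : Type*} (w : List α) (k : ℕ) (x : List α) : Prop :=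
  ∃ q : ℕ × ℕ, runFrom w k (0, 0) x q ∧ 1 ≤ q.2 ∧ q.2 ≤ k ∧ q.2 ≤ q.1

/-- An accepting path of `A_w` labelled by `x`: the list `P` of successive states
(after the initial state `(0,0)`), consistent with the transition relation along
the letters of `x`, ending in an accepting state. -/
def isAccPath {α : Type*} (w : List α) (k : ℕ) (x : List α) (P : List (ℕ × ℕ)) : Prop :=
  P.length = x.length ∧ x ≠ [] ∧
  (∀ t : Fin x.length,
      delta w k (((0, 0) :: P).getD t (0, 0)) (x.get t) (P.getD t (0, 0))) ∧
  1 ≤ (P.getD (x.length - 1) (0, 0)).2 ∧ (P.getD (x.length - 1) (0, 0)).2 ≤ k ∧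
  (P.getD (x.length - 1) (0, 0)).2 ≤ (P.getD (x.length - 1) (0, 0)).1

/-! ### Auxiliary machinery -/

def GoodRun {α : Type*} (w : List α) (k : ℕ) : ℕ × ℕ → List α → List (ℕ × ℕ) → Prop
  | _, [], P => P = []
  | p, a :: x, P => ∃ q P', P = q :: P' ∧ goodTrans w k p a q ∧ GoodRun w k q x P'

def pathsF {α : Type*} [DecidableEq α] (w : List α) (k : ℕ) :
    ℕ × ℕ → List α → Finset (List (ℕ × ℕ))
  | _, [] => {[]}
  | p, a :: x =>
    ((Finset.Ioc p.1 w.length).filter fun ℓ => w[ℓ - 1]? = some a ∧ p.2 + 1 ≤ k).biUnion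
      fun ℓ => (pathsF w k (ℓ, p.2 + 1) x).image fun P => (ℓ, p.2 + 1) :: P

lemma mem_pathsF {α : Type*} [DecidableEq α] (w : List α) (k : ℕ) :
    ∀ (x : List α) (p : ℕ × ℕ) (P : List (ℕ × ℕ)),
      P ∈ pathsF w k p x ↔ GoodRun w k p x P := by
  intro x
  induction x with
  | nil => intro p P; simp [pathsF, GoodRun]
  | cons a x ih =>
    intro p P
    simp only [pathsF, Finset.mem_biUnion, Finset.mem_filter, Finset.mem_Ioc,
      Finset.mem_image, GoodRun]
    constructor
    · rintro ⟨ℓ, ⟨⟨h1, h2⟩, h3, h4⟩, P', hP', rfl⟩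
      exact ⟨(ℓ, p.2 + 1), P', rfl, ⟨h1, h2, rfl, h4, h3⟩, (ih _ _).1 hP'⟩
    · rintro ⟨q, P', rfl, ⟨h1, h2, h3, h4, h5⟩, hgr⟩
      refine ⟨q.1, ⟨⟨h1, h2⟩, h5, by omega⟩, P', ?_, ?_⟩
      · rw [ih]; convert hgr using 2 <;> omega
      · have : q = (q.1, p.2 + 1) := by ext <;> simp [h3]
        rw [← this]

lemma binom_nil {α : Type*} [DecidableEq α] (u : List α) : binom u [] = 1 := by
  cases u <;> rfl

lemma binom_drop_cons {α : Type*} [DecidableEq α] (w : List α) (a : α) (v : List α) :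
    ∀ n i, w.length - i ≤ n →
      binom (w.drop i) (a :: v) =
        ∑ ℓ ∈ (Finset.Ioc i w.length).filter (fun ℓ => w[ℓ - 1]? = some a),
          binom (w.drop ℓ) v := by
  intro n
  induction n with
  | zero =>
    intro i hi
    have hle : w.length ≤ i := by omega
    rw [List.drop_eq_nil_of_le hle]
    have : Finset.Ioc i w.length = ∅ := by
      apply Finset.Ioc_eq_empty; omega
    simp [this, binom]
  | succ n ih =>
    intro i hi
    by_cases hlt : i < w.length
    · have hdrop : w.drop i = w[i] :: w.drop (i + 1) := List.drop_eq_getElem_cons hlt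
      have hsplit : Finset.Ioc i w.length = insert (i + 1) (Finset.Ioc (i + 1) w.length) := by
        ext m; simp only [Finset.mem_Ioc, Finset.mem_insert]; omega
      rw [hdrop]
      show (if w[i] = a then binom (w.drop (i+1)) v else 0) + binom (w.drop (i+1)) (a :: v) = _
      rw [hsplit, Finset.filter_insert]
      have hget : w[(i + 1) - 1]? = some a ↔ w[i] = a := by
        simp [List.getElem?_eq_getElem hlt]
      by_cases hwa : w[i] = a
      · rw [if_pos (hget.2 hwa), Finset.sum_insert (by simp), if_pos hwa,
          ih (i + 1) (by omega)]
      · rw [if_neg (fun h => hwa (hget.1 h)), if_neg hwa, ih (i + 1) (by omega)]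
        simp
    · exact ih i (by omega)

lemma card_pathsF {α : Type*} [DecidableEq α] (w : List α) (k : ℕ) :
    ∀ (x : List α) (i j : ℕ), j + x.length ≤ k →
      (pathsF w k (i, j) x).card = binom (w.drop i) x := by
  intro x
  induction x with
  | nil => intro i j _; simp [pathsF, binom_nil]
  | cons a x ih =>
    intro i j hk
    rw [pathsF, Finset.card_biUnion]
    · have hfil : ((Finset.Ioc i w.length).filter
          fun ℓ => w[ℓ - 1]? = some a ∧ j + 1 ≤ k) =
          (Finset.Ioc i w.length).filter fun ℓ => w[ℓ - 1]? = some a := by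
        apply Finset.filter_congr
        intro ℓ _
        simp only [List.length_cons] at hk
        simp only [eq_iff_iff, and_iff_left_iff_imp]
        intro _; omega
      rw [hfil, binom_drop_cons w a x w.length i (by omega)]
      apply Finset.sum_congr rfl
      intro ℓ _
      rw [Finset.card_image_of_injective _ (fun P Q h => by simpa using h)]
      exact ih ℓ (j + 1) (by simp at hk ⊢; omega)
    · intro ℓ₁ _ ℓ₂ _ hne
      simp only [Finset.disjoint_left, Finset.mem_image]
      rintro P ⟨P₁, _, rfl⟩ ⟨P₂, _, hEq⟩
      exact hne (congrArg Prod.fst (List.cons_eq_cons.1 hEq).1).symm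

lemma goodRun_length {α : Type*} (w : List α) (k : ℕ) :
    ∀ (x : List α) (p : ℕ × ℕ) (P : List (ℕ × ℕ)), GoodRun w k p x P → P.length = x.length := by
  intro x
  induction x with
  | nil => intro p P h; rw [h]; rfl
  | cons a x ih =>
    rintro p P ⟨q, P', rfl, _, hgr⟩
    simp [ih q P' hgr]

lemma goodRun_last {α : Type*} (w : List α) (k : ℕ) :
    ∀ (x : List α) (p : ℕ × ℕ) (P : List (ℕ × ℕ)), GoodRun w k p x P → x ≠ [] →
      (P.getD (x.length - 1) (0, 0)).2 = p.2 + x.length ∧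
      p.1 + x.length ≤ (P.getD (x.length - 1) (0, 0)).1 := by
  intro x
  induction x with
  | nil => intro _ _ _ h; exact absurd rfl h
  | cons a x ih =>
    rintro p P ⟨q, P', rfl, ⟨h1, _, h3, _, _⟩, hgr⟩ _
    cases x with
    | nil =>
      have : P' = [] := hgr
      subst this
      simp [h3]; omega
    | cons b y =>
      have hne : (b :: y) ≠ [] := by simp
      have := ih q P' hgr hne
      have hlen : (a :: b :: y).length - 1 = (b :: y).length - 1 + 1 := by simp
      rw [hlen, List.getD_cons_succ]
      constructor
      · rw [this.1, h3]; simp; omega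
      · have := this.2; simp at this ⊢; omega

lemma goodRun_of_pointwise {α : Type*} (w : List α) (k : ℕ) :
    ∀ (x : List α) (P : List (ℕ × ℕ)) (p : ℕ × ℕ),
      P.length = x.length →
      (∀ t : Fin x.length,
        goodTrans w k ((p :: P).getD t (0, 0)) (x.get t) (P.getD t (0, 0))) →
      GoodRun w k p x P := by
  intro x
  induction x with
  | nil =>
    intro P p hlen _
    exact List.length_eq_zero_iff.1 hlen
  | cons a x ih =>
    intro P p hlen hpt
    cases P with
    | nil => simp at hlen
    | cons q P' =>
      refine ⟨q, P', rfl, ?_, ?_⟩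
      · have := hpt ⟨0, by simp⟩
        simpa using this
      · apply ih P' q (by simpa using hlen)
        intro t
        have := hpt ⟨t.1 + 1, by simpa using t.2⟩
        simpa [List.getD_cons_succ] using this

lemma pointwise_of_goodRun {α : Type*} (w : List α) (k : ℕ) :
    ∀ (x : List α) (P : List (ℕ × ℕ)) (p : ℕ × ℕ),
      GoodRun w k p x P →
      (∀ t : Fin x.length,
        goodTrans w k ((p :: P).getD t (0, 0)) (x.get t) (P.getD t (0, 0))) := by
  intro x
  induction x with
  | nil => intro P p _ t; exact absurd t.2 (by simp)
  | cons a x ih =>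
    rintro P p ⟨q, P', rfl, hgt, hgr⟩ t
    rcases t with ⟨tv, ht⟩
    cases tv with
    | zero => simpa using hgt
    | succ s =>
      have := ih P' q hgr ⟨s, by simpa using ht⟩
      simpa [List.getD_cons_succ] using this

/-- sink is absorbing, and the last state of an accepting path is not the sink,
hence every transition of an accepting path is good -/
lemma acc_to_goodRun {α : Type*} (w : List α) (k : ℕ) (x : List α) (P : List (ℕ × ℕ))
    (h : isAccPath w k x P) : GoodRun w k (0, 0) x P := by
  obtain ⟨hlen, hne, hdel, hacc1, hacc2, hacc3⟩ := h
  have hm : 1 ≤ x.length := List.length_pos_iff.2 hne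
  set sink : ℕ × ℕ := (w.length + 1, k + 1) with hsink
  -- sink propagates
  have hstep : ∀ t, t + 1 < x.length → P.getD t (0, 0) = sink →
      P.getD (t + 1) (0, 0) = sink := by
    intro t ht hts
    have hd := hdel ⟨t + 1, ht⟩
    have hcons : ((0, 0) :: P).getD ((⟨t + 1, ht⟩ : Fin x.length) : ℕ) (0, 0) =
        P.getD t (0, 0) := List.getD_cons_succ
    rw [hcons, hts] at hd
    rcases hd with hgood | ⟨_, hq⟩
    · exfalso
      obtain ⟨_, _, h3, h4, _⟩ := hgood
      rw [h3] at h4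
      simp [hsink] at h4
    · exact hq
  -- from a sink state reach the last being sink
  have hprop : ∀ d t, t + d = x.length - 1 → t < x.length → P.getD t (0, 0) = sink →
      P.getD (x.length - 1) (0, 0) = sink := by
    intro d
    induction d with
    | zero => intro t h1 _ h3; rwa [← h1, Nat.add_zero]
    | succ d ihd =>
      intro t h1 h2 h3
      exact ihd (t + 1) (by omega) (by omega) (hstep t (by omega) h3)
  -- last state is not sink
  have hlast : P.getD (x.length - 1) (0, 0) ≠ sink := by
    intro h
    rw [h] at hacc2
    simp [hsink] at hacc2
  -- no state is sink
  have hnosink : ∀ t, t < x.length → P.getD t (0, 0) ≠ sink := by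
    intro t ht h
    exact hlast (hprop (x.length - 1 - t) t (by omega) ht h)
  apply goodRun_of_pointwise
  · exact hlen
  · intro t
    rcases hdel t with hgood | ⟨_, hq⟩
    · exact hgood
    · exact absurd hq (hnosink t t.2)

lemma goodRun_to_acc {α : Type*} (w : List α) (k : ℕ) (x : List α) (P : List (ℕ × ℕ))
    (h₁ : 1 ≤ x.length) (h₂ : x.length ≤ k)
    (h : GoodRun w k (0, 0) x P) : isAccPath w k x P := by
  have hne : x ≠ [] := by intro hh; rw [hh] at h₁; simp at h₁
  have hlast := goodRun_last w k x (0, 0) P h hne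
  refine ⟨goodRun_length w k x (0, 0) P h, hne, ?_, ?_, ?_, ?_⟩
  · intro t; exact Or.inl (pointwise_of_goodRun w k x P (0, 0) h t)
  · rw [hlast.1]; omega
  · rw [hlast.1]; omega
  · rw [hlast.1]
    have := hlast.2
    omega

theorem card_accPaths_eq_binom {α : Type*} [DecidableEq α] (w : List α) (k : ℕ)
    (x : List α) (h₁ : 1 ≤ x.length) (h₂ : x.length ≤ k) :
    {P : List (ℕ × ℕ) | isAccPath w k x P}.ncard = binom w x := by
  have hset : {P : List (ℕ × ℕ) | isAccPath w k x P} = ↑(pathsF w k (0, 0) x) := by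
    ext P
    simp only [Set.mem_setOf_eq, Finset.coe_sort_coe, Finset.mem_coe,
      mem_pathsF]
    exact ⟨acc_to_goodRun w k x P, goodRun_to_acc w k x P h₁ h₂⟩
  rw [hset, Set.ncard_coe_finset]
  have := card_pathsF w k x 0 0 (by omega)
  simpa using this
end

section
/- Accepting paths of A_w labelled by words of length at most k are in bijection with strictly increasing sequences of indices 1 ≤ i_1 < ... < i_m ≤ n with 1 ≤ m ≤ k; the path corresponding to (i_1,...,i_m) visits (0,0),(i_1,1),...,(i_m,m) and is labelled by w[i_1]...w[i_m]. -/
private lemma fin_strictMono_nat {n : ℕ} (f : Fin n → ℕ)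
    (h : ∀ (t : ℕ) (h1 : t + 1 < n), f ⟨t, Nat.lt_of_succ_lt h1⟩ < f ⟨t + 1, h1⟩) :
    StrictMono f := by
  have key : ∀ (b : ℕ) (hb : b < n) (a : ℕ) (ha : a < n), a < b → f ⟨a, ha⟩ < f ⟨b, hb⟩ := by
    intro b
    induction b with
    | zero => omega
    | succ m ih =>
      intro hb a ha hab
      rcases Nat.lt_or_ge a m with h' | h'
      · exact lt_trans (ih (Nat.lt_of_succ_lt hb) a ha h') (h m hb)
      · have : a = m := by omega
        subst this
        exact h a hb
  rintro ⟨a, ha⟩ ⟨b, hb⟩ hab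
  exact key b hb a ha hab

private lemma fin_ge_succ {n : ℕ} (f : Fin n → ℕ) (hf : StrictMono f) (h0 : 0 < n)
    (h1 : 1 ≤ f ⟨0, h0⟩) : ∀ t : Fin n, t.val + 1 ≤ f t := by
  have key : ∀ (t : ℕ) (ht : t < n), t + 1 ≤ f ⟨t, ht⟩ := by
    intro t
    induction t with
    | zero => intro _; exact h1
    | succ m ih =>
      intro ht
      have h2 := hf (show (⟨m, Nat.lt_of_succ_lt ht⟩ : Fin n) < ⟨m + 1, ht⟩ by
        rw [Fin.mk_lt_mk]; omega)
      have := ih (Nat.lt_of_succ_lt ht)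
      omega
  rintro ⟨t, ht⟩
  exact key t ht

theorem accPath_iff_strictMono_indices {α : Type*} (w : List α) (k : ℕ) (x : List α)
    (h₁ : 1 ≤ x.length) (h₂ : x.length ≤ k) (P : List (ℕ × ℕ)) :
    isAccPath w k x P ↔
      ∃ i : Fin x.length → ℕ, StrictMono i ∧
        (∀ t : Fin x.length, 1 ≤ i t ∧ i t ≤ w.length ∧ w[i t - 1]? = some (x.get t)) ∧
        P = List.ofFn (fun t : Fin x.length => (i t, (t : ℕ) + 1)) := by
  set n := x.length with hn
  constructor
  · rintro ⟨hlen, hne, htr, ha1, ha2, ha3⟩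
    rw [← hn] at ha1 ha2 ha3 hlen
    set Q : ℕ → ℕ × ℕ := fun t => P.getD t (0, 0) with hQ
    -- second components are t+1 or k+1
    have hsnd : ∀ t, t < n → (Q t).2 = t + 1 ∨ (Q t).2 = k + 1 := by
      intro t
      induction t with
      | zero =>
        intro ht
        have := htr ⟨0, ht⟩
        rcases this with hg | ⟨_, hs⟩
        · left
          have := hg.2.2.1
          simpa [hQ, List.getD_cons_zero] using this
        · right
          rw [show Q 0 = (w.length + 1, k + 1) from hs]
      | succ m ih =>
        intro ht
        have hd := htr ⟨m + 1, ht⟩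
        have hprev : ((0, 0) :: P).getD (↑(⟨m + 1, ht⟩ : Fin n)) (0, 0) = Q m := by
          simp [hQ, List.getD_cons_succ]
        rw [hprev] at hd
        rcases hd with hg | ⟨_, hs⟩
        · have h3 := hg.2.2.1
          have h4 := hg.2.2.2.1
          rcases ih (Nat.lt_of_succ_lt ht) with h5 | h5
          · left; simp only [hQ] at *; omega
          · exfalso; simp only [hQ] at *; omega
        · right
          rw [show Q (m + 1) = (w.length + 1, k + 1) from hs]
    -- sink propagation
    have hprop : ∀ d t, t + d < n → (Q t).2 = k + 1 → (Q (t + d)).2 = k + 1 := by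
      intro d
      induction d with
      | zero => intro t _ h; simpa using h
      | succ m ih =>
        intro t ht hk
        have h1 : (Q (t + m)).2 = k + 1 := ih t (by omega) hk
        have hd := htr ⟨t + m + 1, by omega⟩
        have hprev : ((0, 0) :: P).getD (↑(⟨t + m + 1, by omega⟩ : Fin n)) (0, 0) = Q (t + m) := by
          simp [hQ, List.getD_cons_succ]
        rw [hprev] at hd
        rcases hd with hg | ⟨_, hs⟩
        · exfalso
          have := hg.2.2.1
          have := hg.2.2.2.1
          omega
        · show (Q (t + (m + 1))).2 = k + 1
          have heq : t + (m + 1) = t + m + 1 := by omega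
          rw [heq, show Q (t + m + 1) = (w.length + 1, k + 1) from hs]
    -- all second components are t+1
    have hA : ∀ t, t < n → (Q t).2 = t + 1 := by
      intro t ht
      rcases hsnd t ht with h | h
      · exact h
      · exfalso
        have hlast := hprop (n - 1 - t) t (by omega) h
        have heq : t + (n - 1 - t) = n - 1 := by omega
        rw [heq] at hlast
        have ha2' : (Q (n - 1)).2 ≤ k := ha2
        omega
    -- all transitions are good
    have hgood : ∀ t : Fin n, goodTrans w k (((0, 0) :: P).getD t (0, 0)) (x.get t) (Q t) := by
      intro t
      rcases htr t with hg | ⟨_, hs⟩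
      · exact hg
      · exfalso
        have h1 : (Q ↑t).2 = ↑t + 1 := hA t t.isLt
        have h2 : (Q ↑t).2 = k + 1 := by
          rw [show Q ↑t = (w.length + 1, k + 1) from hs]
        have htl : (t : ℕ) < n := t.isLt
        omega
    refine ⟨fun t => (Q t).1, ?_, ?_, ?_⟩
    · apply fin_strictMono_nat
      intro t ht1
      have hg := hgood ⟨t + 1, ht1⟩
      have hprev : ((0, 0) :: P).getD (↑(⟨t + 1, ht1⟩ : Fin n)) (0, 0) = Q t := by
        simp [hQ, List.getD_cons_succ]
      rw [hprev] at hg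
      exact hg.1
    · intro t
      have hg := hgood t
      refine ⟨?_, hg.2.1, hg.2.2.2.2⟩
      -- 1 ≤ i t : use i 0 ≥ 1 and monotonicity
      have hg0 := hgood ⟨0, by omega⟩
      have hprev0 : ((0, 0) :: P).getD (↑(⟨0, by omega⟩ : Fin n)) (0, 0) = (0, 0) := by
        simp
      rw [hprev0] at hg0
      have h10 : 1 ≤ (Q 0).1 := hg0.1
      have hsm : StrictMono (fun t : Fin n => (Q t).1) := by
        apply fin_strictMono_nat
        intro s hs1
        have hg' := hgood ⟨s + 1, hs1⟩
        have hprev : ((0, 0) :: P).getD (↑(⟨s + 1, hs1⟩ : Fin n)) (0, 0) = Q s := by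
          simp [hQ, List.getD_cons_succ]
        rw [hprev] at hg'
        exact hg'.1
      have := fin_ge_succ _ hsm (by omega) h10 t
      exact le_trans (Nat.le_add_left 1 _) this
    · apply List.ext_getElem (by simp [hlen, hn])
      intro t ht1 ht2
      have htn : t < n := by omega
      have : P[t] = Q t := (List.getD_eq_getElem P (0,0) ht1).symm
      rw [List.getElem_ofFn]
      rw [this]
      have h2 : (Q t).2 = t + 1 := hA t htn
      have h3 : (Q t).1 = (fun s : Fin n => (Q ↑s).1) ⟨t, htn⟩ := rfl
      exact Prod.ext h3 (by simpa using h2)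
  · rintro ⟨i, hsm, hcond, rfl⟩
    have hxne : x ≠ [] := List.ne_nil_of_length_pos (by omega)
    have hlen : (List.ofFn (fun t : Fin n => (i t, (t : ℕ) + 1))).length = n := by simp
    have hQ : ∀ t : ℕ, ∀ ht : t < n,
        (List.ofFn (fun t : Fin n => (i t, (t : ℕ) + 1))).getD t (0, 0) = (i ⟨t, ht⟩, t + 1) := by
      intro t ht
      rw [List.getD_eq_getElem _ (0,0) (by simpa using ht), List.getElem_ofFn]
    have hge : ∀ t : Fin n, t.val + 1 ≤ i t :=
      fin_ge_succ i hsm (by omega) (hcond ⟨0, by omega⟩).1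
    refine ⟨by simp, hxne, ?_, ?_, ?_, ?_⟩
    · intro t
      left
      obtain ⟨t, ht⟩ := t
      rw [hQ t ht]
      rcases Nat.eq_zero_or_pos t with rfl | hp
      · have hprev : ((0, 0) :: List.ofFn (fun t : Fin n => (i t, (t : ℕ) + 1))).getD
            ((0:ℕ)) (0, 0) = ((0:ℕ), (0:ℕ)) := List.getD_cons_zero
        rw [hprev]
        refine ⟨(hcond ⟨0, ht⟩).1, (hcond ⟨0, ht⟩).2.1, rfl, by omega, (hcond ⟨0, ht⟩).2.2⟩
      · obtain ⟨m, rfl⟩ : ∃ m, t = m + 1 := ⟨t - 1, by omega⟩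
        have hprev : ((0, 0) :: List.ofFn (fun t : Fin n => (i t, (t : ℕ) + 1))).getD (m + 1) (0, 0)
            = (i ⟨m, by omega⟩, m + 1) := by
          rw [List.getD_cons_succ, hQ m (by omega)]
        rw [hprev]
        refine ⟨hsm (show (⟨m, by omega⟩ : Fin n) < ⟨m+1, ht⟩ by rw [Fin.mk_lt_mk]; omega),
          (hcond ⟨m+1, ht⟩).2.1, rfl, by omega, (hcond ⟨m+1, ht⟩).2.2⟩
    · rw [hQ (n-1) (by omega)]; simp
    · rw [hQ (n-1) (by omega)]; simp; omega
    · rw [hQ (n-1) (by omega)]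
      have := hge ⟨n-1, by omega⟩
      simp at this ⊢
      omega
end
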